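/- arXiv:1310.7891 — 6 statements merged into one kernel-verified Lean document; each statement's English description precedes it below -/
import Mathlib

section
/- For a field F, q ∈ F with q ≠ 0 and q² ≠ 1, and all integers a, b, the determinant of the 2×2 matrix with rows ([a]_q[b+1]_q, [a]_q[b]_q) and ([a]_q[b]_q, [a+1]_q[b]_q) equals [a]_q·[b]_q·[a+b+1]_q. -/
noncomputable def qint {F : Type*} [Field F] (q : F) (n : ℤ) : F :=
  (q ^ n - q ^ (-n)) / (q - q⁻¹)

/-! Expanding the determinant gives `[a][b] ([a+1][b+1] - [a][b])`, and the bracket is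
`[a+b+1]` by the q-analogue of `(m+1)(n+1) - mn = m+n+1`. -/

theorem qint_succ_mul_qint_succ_sub_qint_mul_qint {F : Type*} [Field F] (q : F) (m n : ℤ) :
    qint q (m + 1) * qint q (n + 1) - qint q m * qint q n = qint q (m + n + 1) := by
  by_cases hd : q - q⁻¹ = 0
  · simp only [qint, hd, div_zero, mul_zero, sub_zero]
  have hq : q ≠ 0 := by
    rintro rfl
    simp at hd
  have numerator :
      (q ^ (m + 1) - q ^ (-(m + 1))) * (q ^ (n + 1) - q ^ (-(n + 1)))
        - (q ^ m - q ^ (-m)) * (q ^ n - q ^ (-n))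
        = (q ^ (m + n + 1) - q ^ (-(m + n + 1))) * (q - q⁻¹) := by
    simp only [neg_add, zpow_add₀ hq, zpow_neg, zpow_one]
    have hm : q ^ m ≠ 0 := zpow_ne_zero m hq
    have hn : q ^ n ≠ 0 := zpow_ne_zero n hq
    field_simp
    ring
  rw [qint, qint, qint, qint, qint, div_mul_div_comm, div_mul_div_comm, ← sub_div, numerator,
    mul_div_mul_right _ _ hd]

theorem gram_det_two_general {F : Type*} [Field F] (q : F)
    (a b : ℤ) :
    Matrix.det !![qint q a * qint q (b + 1), qint q a * qint q b;
                  qint q a * qint q b, qint q (a + 1) * qint q b]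
      = qint q a * qint q b * qint q (a + b + 1) := by
  rw [Matrix.det_fin_two_of, ← qint_succ_mul_qint_succ_sub_qint_mul_qint]
  ring

theorem gram_det_two {F : Type*} [Field F] (q : F) (hq : q ≠ 0) (hq2 : q ^ 2 ≠ 1)
    (a b : ℤ) :
    Matrix.det !![qint q a * qint q (b + 1), qint q a * qint q b;
                  qint q a * qint q b, qint q (a + 1) * qint q b]
      = qint q a * qint q b * qint q (a + b + 1) :=
  gram_det_two_general q a b
end

section
/- Let F be a field, q ∈ F with q ≠ 0 and q² ≠ 1. For all integers a, b, c, m the following identity holds: [b+2c−m]_q·[b+c]_q·[a−b+2]_q − (q^(m−c) + q^(c−m))·[b+c−1]_q·[b+c]_q·[a−b+1]_q + [b+m−1]_q·[b+c−1]_q·[a−b]_q = [c−m+1]_q·[a+b+2c]_q. -/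
def qnum {F : Type*} [Field F] (q : F) (n : ℤ) : F :=
  q ^ n - q ^ (-n)

theorem qint_eq_qnum_div {F : Type*} [Field F] (q : F) (n : ℤ) :
    qint q n = qnum q n / qnum q 1 := by
  simp [qint, qnum]

theorem qnum_e_alpha0_identity {F : Type*} [Field F] {q : F} (hq : q ≠ 0) (a b c m : ℤ) :
    qnum q (b + 2 * c - m) * qnum q (b + c) * qnum q (a - b + 2)
      - (q ^ (m - c) + q ^ (c - m)) * qnum q (b + c - 1) * qnum q (b + c) * qnum q (a - b + 1)
      + qnum q (b + m - 1) * qnum q (b + c - 1) * qnum q (a - b)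
      = qnum q 1 * qnum q (c - m + 1) * qnum q (a + b + 2 * c) := by
  simp only [qnum, mul_sub, sub_mul, add_mul, ← zpow_add₀ hq]
  ring_nf

theorem e_alpha0_identity_general {F : Type*} [Field F] (q : F)
    (a b c m : ℤ) :
    qint q (b + 2 * c - m) * qint q (b + c) * qint q (a - b + 2)
      - (q ^ (m - c) + q ^ (c - m)) * qint q (b + c - 1) * qint q (b + c) * qint q (a - b + 1)
      + qint q (b + m - 1) * qint q (b + c - 1) * qint q (a - b)
      = qint q (c - m + 1) * qint q (a + b + 2 * c) := by
  simp only [qint_eq_qnum_div]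
  rcases eq_or_ne (qnum q 1) 0 with hd | hd
  · simp [hd]
  have hq : q ≠ 0 := by
    rintro rfl
    simp [qnum] at hd
  field_simp
  linear_combination qnum_e_alpha0_identity hq a b c m

theorem e_alpha0_identity {F : Type*} [Field F] (q : F) (hq : q ≠ 0) (hq2 : q ^ 2 ≠ 1)
    (a b c m : ℤ) :
    qint q (b + 2 * c - m) * qint q (b + c) * qint q (a - b + 2)
      - (q ^ (m - c) + q ^ (c - m)) * qint q (b + c - 1) * qint q (b + c) * qint q (a - b + 1)
      + qint q (b + m - 1) * qint q (b + c - 1) * qint q (a - b)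
      = qint q (c - m + 1) * qint q (a + b + 2 * c) :=
  e_alpha0_identity_general q a b c m
end

section
/- Let F be a field, q ∈ F with q ≠ 0 and q² ≠ 1. For all integers a, b, p: ([b+p]_q)²·[a−b+2]_q − 2·[b+p]_q·[b+p−1]_q·[a−b+1]_q + ([b+p−1]_q)²·[a−b]_q = [a+b+2p]_q. -/
/- Writing `x = q ^ m`, the two identities `[m] q - [m-1] = x` and `[m] q⁻¹ - [m-1] = x⁻¹` turn
the left-hand side into `(x² q^k - x⁻² q^(-k)) / (q - q⁻¹) = [k + 2m]`, where `k = a - b` and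
`m = b + p`: each `[k + j]` is linear in `q ^ k` and `q ^ (-k)`, so the weighted second
difference `A² [k+2] - 2AB [k+1] + B² [k]` only sees the squares `(A q - B)²` and
`(A q⁻¹ - B)²`. -/

section

variable {F : Type*} [Field F] {q : F}

lemma sub_inv_ne_zero_of_sq_ne_one (hq : q ≠ 0) (hq2 : q ^ 2 ≠ 1) : q - q⁻¹ ≠ 0 := by
  intro h
  apply hq2
  field_simp at h
  linear_combination h

lemma ne_zero_of_sub_inv_ne_zero (hd : q - q⁻¹ ≠ 0) : q ≠ 0 := by
  rintro rfl
  simp at hd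

lemma qint_weighted_second_difference (hq : q ≠ 0) (A B : F) (k : ℤ) :
    A ^ 2 * qint q (k + 2) - 2 * A * B * qint q (k + 1) + B ^ 2 * qint q k
      = ((A * q - B) ^ 2 * q ^ k - (A * q⁻¹ - B) ^ 2 * q ^ (-k)) / (q - q⁻¹) := by
  simp only [qint, neg_add, zpow_add₀ hq, zpow_neg, zpow_one, zpow_two]
  ring

lemma qint_mul_sub_qint_sub_one (hd : q - q⁻¹ ≠ 0) (m : ℤ) :
    qint q m * q - qint q (m - 1) = q ^ m := by
  have hq := ne_zero_of_sub_inv_ne_zero hd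
  rw [qint, qint, div_mul_eq_mul_div, div_sub_div_same, div_eq_iff hd, neg_sub,
    zpow_sub_one₀ hq, zpow_sub₀ hq, zpow_neg, zpow_one]
  ring

lemma qint_mul_inv_sub_qint_sub_one (hd : q - q⁻¹ ≠ 0) (m : ℤ) :
    qint q m * q⁻¹ - qint q (m - 1) = q ^ (-m) := by
  have hq := ne_zero_of_sub_inv_ne_zero hd
  rw [qint, qint, div_mul_eq_mul_div, div_sub_div_same, div_eq_iff hd, neg_sub,
    zpow_sub_one₀ hq, zpow_sub₀ hq, zpow_neg, zpow_one]
  field_simp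
  ring

lemma qint_sq_weighted_second_difference (hd : q - q⁻¹ ≠ 0) (m k : ℤ) :
    qint q m ^ 2 * qint q (k + 2) - 2 * qint q m * qint q (m - 1) * qint q (k + 1)
      + qint q (m - 1) ^ 2 * qint q k = qint q (k + 2 * m) := by
  have hq := ne_zero_of_sub_inv_ne_zero hd
  rw [qint_weighted_second_difference hq, qint_mul_sub_qint_sub_one hd,
    qint_mul_inv_sub_qint_sub_one hd, qint, mul_comm 2 m]
  simp only [neg_add, ← neg_mul, zpow_add₀ hq, zpow_mul, zpow_two, pow_two]
  ring

end

theorem e_alpha0_identity_evenN_boundary {F : Type*} [Field F] (q : F)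
    (hq : q ≠ 0) (hq2 : q ^ 2 ≠ 1) (a b p : ℤ) :
    (qint q (b + p)) ^ 2 * qint q (a - b + 2)
      - 2 * qint q (b + p) * qint q (b + p - 1) * qint q (a - b + 1)
      + (qint q (b + p - 1)) ^ 2 * qint q (a - b)
      = qint q (a + b + 2 * p) := by
  rw [qint_sq_weighted_second_difference (sub_inv_ne_zero_of_sq_ne_one hq hq2)]
  congr 1
  ring
end

section
/- Let F be a field, q ∈ F with q ≠ 0 and q² ≠ 1, n ≥ 1 an integer, and μ₁, …, μₙ ∈ ℤ; set μ_{n+1} = 0. Then Σ_{i=1}^{n+1} q^(2i − 1 − n − μᵢ − δ_{i,n+1}) · (∏_{j=1}^{i−1} [μⱼ + n − j]_q) · (∏_{j=i+1}^{n} [μⱼ + n + 1 − j]_q) = ∏_{j=1}^{n} [μⱼ + 1 + n − j]_q, where δ_{i,n+1} = 1 if i = n+1 and 0 otherwise. -/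
lemma qint_succ {F : Type*} [Field F] (q : F) (hq : q ≠ 0) (hq2 : q ^ 2 ≠ 1) (m : ℤ) :
    qint q (m + 1) = q ^ (-m) + q * qint q m := by
  have hd : q - q⁻¹ ≠ 0 := by
    intro h
    apply hq2
    have h1 : q = q⁻¹ := sub_eq_zero.mp h
    have := mul_inv_cancel₀ hq
    rw [← h1] at this
    rw [sq]; exact this
  have h1 : q ^ (m + 1) = q ^ m * q := zpow_add_one₀ hq m
  have h2 : q ^ (-(m + 1)) = q ^ (-m) * q⁻¹ := by
    rw [neg_add, zpow_add₀ hq, zpow_neg_one]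
  have hm : (q ^ m - q ^ (-m)) / (q - q⁻¹) * (q - q⁻¹) = q ^ m - q ^ (-m) :=
    div_mul_cancel₀ _ hd
  unfold qint
  rw [div_eq_iff hd, h1, h2, add_mul, mul_assoc, hm]
  ring

lemma key {F : Type*} [Field F] (q : F) (hq : q ≠ 0) (hq2 : q ^ 2 ≠ 1) (a : ℕ → ℤ) (k : ℕ) :
    (∑ i ∈ Finset.Icc 1 k, q ^ ((i : ℤ) - 1 - a i)
        * (∏ j ∈ Finset.Icc 1 (i - 1), qint q (a j))
        * (∏ j ∈ Finset.Icc (i + 1) k, qint q (a j + 1)))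
      + q ^ (k : ℤ) * ∏ j ∈ Finset.Icc 1 k, qint q (a j)
      = ∏ j ∈ Finset.Icc 1 k, qint q (a j + 1) := by
  induction k with
  | zero => simp
  | succ k ih =>
    have hk1 : 1 ≤ k + 1 := Nat.le_add_left 1 k
    rw [Finset.sum_Icc_succ_top hk1, Finset.prod_Icc_succ_top hk1,
        Finset.prod_Icc_succ_top hk1]
    have hsum : ∀ i ∈ Finset.Icc 1 k,
        q ^ ((i : ℤ) - 1 - a i) * (∏ j ∈ Finset.Icc 1 (i - 1), qint q (a j))
          * (∏ j ∈ Finset.Icc (i + 1) (k + 1), qint q (a j + 1))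
        = (q ^ ((i : ℤ) - 1 - a i) * (∏ j ∈ Finset.Icc 1 (i - 1), qint q (a j))
          * (∏ j ∈ Finset.Icc (i + 1) k, qint q (a j + 1))) * qint q (a (k + 1) + 1) := by
      intro i hi
      have hik : i + 1 ≤ k + 1 := by
        have := (Finset.mem_Icc.mp hi).2
        omega
      rw [Finset.prod_Icc_succ_top hik]
      ring
    rw [Finset.sum_congr rfl hsum, ← Finset.sum_mul]
    have hempty : Finset.Icc (k + 1 + 1) (k + 1) = ∅ := by
      apply Finset.Icc_eq_empty; omega
    rw [hempty]
    simp only [Finset.prod_empty, mul_one, Nat.add_sub_cancel]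
    rw [← ih]
    have hq1 : qint q (a (k + 1) + 1) = q ^ (-(a (k + 1))) + q * qint q (a (k + 1)) :=
      qint_succ q hq hq2 _
    have e1 : ((k : ℤ) + 1 - 1 - a (k + 1)) = (k : ℤ) + (-(a (k + 1))) := by ring
    have e2 : q ^ ((k : ℤ) + (-(a (k + 1)))) = q ^ (k : ℤ) * q ^ (-(a (k + 1))) :=
      zpow_add₀ hq _ _
    have e3 : q ^ ((k : ℤ) + 1) = q ^ (k : ℤ) * q := zpow_add_one₀ hq _
    push_cast
    rw [e1, e2, e3, hq1]
    ring

theorem leading_coeff_C_n_plus_one {F : Type*} [Field F] (q : F)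
    (hq : q ≠ 0) (hq2 : q ^ 2 ≠ 1) (n : ℕ) (hn : 1 ≤ n)
    (μ : ℕ → ℤ) (hμ : μ (n + 1) = 0) :
    ∑ i ∈ Finset.Icc 1 (n + 1),
        q ^ (2 * (i : ℤ) - 1 - (n : ℤ) - μ i - (if i = n + 1 then 1 else 0))
          * (∏ j ∈ Finset.Icc 1 (i - 1), qint q (μ j + (n : ℤ) - (j : ℤ)))
          * (∏ j ∈ Finset.Icc (i + 1) n, qint q (μ j + (n : ℤ) + 1 - (j : ℤ)))
      = ∏ j ∈ Finset.Icc 1 n, qint q (μ j + 1 + (n : ℤ) - (j : ℤ)) := by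
  set a : ℕ → ℤ := fun j => μ j + (n : ℤ) - (j : ℤ) with ha
  have hk1 : 1 ≤ n + 1 := Nat.le_add_left 1 n
  rw [Finset.sum_Icc_succ_top hk1]
  have hsum : ∀ i ∈ Finset.Icc 1 n,
      q ^ (2 * (i : ℤ) - 1 - (n : ℤ) - μ i - (if i = n + 1 then 1 else 0))
        * (∏ j ∈ Finset.Icc 1 (i - 1), qint q (μ j + (n : ℤ) - (j : ℤ)))
        * (∏ j ∈ Finset.Icc (i + 1) n, qint q (μ j + (n : ℤ) + 1 - (j : ℤ)))
      = q ^ ((i : ℤ) - 1 - a i) * (∏ j ∈ Finset.Icc 1 (i - 1), qint q (a j))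
        * (∏ j ∈ Finset.Icc (i + 1) n, qint q (a j + 1)) := by
    intro i hi
    have hin : i ≤ n := (Finset.mem_Icc.mp hi).2
    have hne : i ≠ n + 1 := by omega
    rw [if_neg hne]
    have : 2 * (i : ℤ) - 1 - (n : ℤ) - μ i - 0 = (i : ℤ) - 1 - a i := by
      simp [ha]; ring
    rw [this]
    congr 1
    apply Finset.prod_congr rfl
    intro j _
    congr 1
    simp [ha]; ring
  rw [Finset.sum_congr rfl hsum]
  have htop : q ^ (2 * ((n : ℤ) + 1) - 1 - (n : ℤ) - μ (n + 1) - (if n + 1 = n + 1 then 1 else 0))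
      * (∏ j ∈ Finset.Icc 1 (n + 1 - 1), qint q (μ j + (n : ℤ) - (j : ℤ)))
      * (∏ j ∈ Finset.Icc (n + 1 + 1) n, qint q (μ j + (n : ℤ) + 1 - (j : ℤ)))
      = q ^ ((n : ℤ)) * ∏ j ∈ Finset.Icc 1 n, qint q (a j) := by
    rw [if_pos rfl, hμ]
    have hempty : Finset.Icc (n + 1 + 1) n = ∅ := by apply Finset.Icc_eq_empty; omega
    rw [hempty]
    simp only [Finset.prod_empty, mul_one, Nat.add_sub_cancel]
    congr 1
    · congr 1; ring
  push_cast at htop ⊢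
  rw [htop]
  have hrhs : ∏ j ∈ Finset.Icc 1 n, qint q (μ j + 1 + (n : ℤ) - (j : ℤ))
      = ∏ j ∈ Finset.Icc 1 n, qint q (a j + 1) := by
    apply Finset.prod_congr rfl
    intro j _
    congr 1
    simp [ha]; ring
  rw [hrhs]
  exact key q hq hq2 a n
end

section
/- Let F be a field, q ∈ F with q ≠ 0 and q² ≠ 1. For all integers λ and p ≥ 1: q^(−2λ−2p+2)·[p]_q + q^(−λ+1)·(1 + [2p−1]_q)·[λ+p−1]_q + q^(2p)·[λ+p−1]_q·[λ]_q = [λ+p]_q·[λ+2p−1]_q. -/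
theorem singular_leading_coeff_evenP {F : Type*} [Field F] (q : F)
    (hq : q ≠ 0) (hq2 : q ^ 2 ≠ 1) (lam p : ℤ) (hp : 1 ≤ p) :
    q ^ (-2 * lam - 2 * p + 2) * qint q p
      + q ^ (-lam + 1) * (1 + qint q (2 * p - 1)) * qint q (lam + p - 1)
      + q ^ (2 * p) * qint q (lam + p - 1) * qint q lam
      = qint q (lam + p) * qint q (lam + 2 * p - 1) := by
  have hd : q - q⁻¹ ≠ 0 := by
    intro h
    apply hq2
    have h2 : q = q⁻¹ := sub_eq_zero.mp h
    field_simp at h2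
    linear_combination h2
  have key : ∀ a b c : ℤ, q ^ (a * lam + b * p + c) = (q ^ lam) ^ a * (q ^ p) ^ b * q ^ c := by
    intro a b c
    rw [zpow_add₀ hq, zpow_add₀ hq, mul_comm a lam, mul_comm b p, zpow_mul, zpow_mul]
  have ha : q ^ lam ≠ 0 := zpow_ne_zero _ hq
  have hb : q ^ p ≠ 0 := zpow_ne_zero _ hq
  simp only [qint]
  rw [show (q:F) ^ (2*p) = (q^p)^(2:ℤ) by rw [mul_comm, zpow_mul]]
  rw [show (-2 * lam - 2 * p + 2 : ℤ) = (-2) * lam + (-2) * p + 2 by ring,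
    show (-lam + 1 : ℤ) = (-1) * lam + 0 * p + 1 by ring,
    show (2 * p - 1 : ℤ) = 0 * lam + 2 * p + (-1) by ring,
    show (-(0 * lam + 2 * p + (-1)) : ℤ) = 0 * lam + (-2) * p + 1 by ring,
    show (lam + p - 1 : ℤ) = 1 * lam + 1 * p + (-1) by ring,
    show (-(1 * lam + 1 * p + (-1)) : ℤ) = (-1) * lam + (-1) * p + 1 by ring,
    show (lam + p : ℤ) = 1 * lam + 1 * p + 0 by ring,
    show (-(1 * lam + 1 * p + 0) : ℤ) = (-1) * lam + (-1) * p + 0 by ring,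
    show (lam + 2 * p - 1 : ℤ) = 1 * lam + 2 * p + (-1) by ring,
    show (-(1 * lam + 2 * p + (-1)) : ℤ) = (-1) * lam + (-2) * p + 1 by ring]
  simp only [key, zpow_neg, zpow_ofNat, zpow_one, zpow_zero]
  have h1 : q * q⁻¹ = 1 := mul_inv_cancel₀ hq
  have h2 : q ^ lam * (q ^ lam)⁻¹ = 1 := mul_inv_cancel₀ ha
  have h3 : q ^ p * (q ^ p)⁻¹ = 1 := mul_inv_cancel₀ hb
  have h4 : (q - q⁻¹) * (q - q⁻¹)⁻¹ = 1 := mul_inv_cancel₀ hd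
  simp only [div_eq_mul_inv]
  linear_combination ((q  ^ lam) * (q  ^ lam)⁻¹ * (q  ^ p) * (q - q⁻¹)⁻¹ + q⁻¹ * (q  ^ lam) * (q  ^ lam)⁻¹ * (q  ^ p) ^ 3 * (q - q⁻¹)⁻¹ ^ 2 + q * (q  ^ lam)⁻¹ ^ 2 * (q  ^ p)⁻¹ ^ 3 * (q - q⁻¹)⁻¹ ^ 2 - q * (q  ^ lam)⁻¹ ^ 2 * (q  ^ p) ^ 2 * (q  ^ p)⁻¹ * (q - q⁻¹)⁻¹ ^ 2 - q * (q  ^ lam) * (q  ^ lam)⁻¹ * (q  ^ p) * (q  ^ p)⁻¹ ^ 2 * (q - q⁻¹)⁻¹ ^ 2) * h1 + ((q  ^ p) * (q - q⁻¹)⁻¹ + q⁻¹ * (q  ^ p) ^ 2 * (q  ^ p)⁻¹ * (q - q⁻¹)⁻¹ ^ 2 - q * (q  ^ p) ^ 2 * (q  ^ p)⁻¹ * (q - q⁻¹)⁻¹ ^ 2) * h2 + (q⁻¹ * (q  ^ p) * (q - q⁻¹)⁻¹ ^ 2 - q * (q  ^ p) * (q - q⁻¹)⁻¹ ^ 2 +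 q ^ 2 * (q  ^ lam)⁻¹ ^ 2 * (q  ^ p)⁻¹ * (q - q⁻¹)⁻¹) * h3 + (- (q  ^ p) * (q - q⁻¹)⁻¹ + q ^ 2 * (q  ^ lam)⁻¹ ^ 2 * (q  ^ p)⁻¹ ^ 3 * (q - q⁻¹)⁻¹) * h4
end

section
/- Let F be a field and s ∈ F with s ≠ 0 and s⁴ ≠ 1; set q = s² and for 2x ∈ ℤ define [x]_q = (s^(2x) − s^(−2x))/(s² − s⁻²). Then for all integers λ and p ≥ 0: q^(−2λ−2p+1)·[p + 1/2]_q + q^(−λ+1)·(1 + [2p]_q)·[λ + p − 1/2]_q + q^(2p+1)·[λ + p − 1/2]_q·[λ]_q = [λ + p + 1/2]_q·[λ + 2p]_q. -/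
/-- Half-integer q-number: `hqint s m` represents `[m/2]_q` where `q = s ^ 2`. -/
noncomputable def hqint {F : Type*} [Field F] (s : F) (m : ℤ) : F :=
  (s ^ m - s ^ (-m)) / (s ^ (2 : ℤ) - s ^ (-2 : ℤ))

/-!
Multiplying through by the square of the common denominator `s ^ 2 - s ^ (-2)` turns the identity
into one between Laurent polynomials in `s`, `s ^ λ` and `s ^ p`, which is checked by normalisation.
-/

section
variable {F : Type*} [Field F]

def hqnum (s : F) (m : ℤ) : F := s ^ m - s ^ (-m)

theorem hqint_eq_hqnum_div (s : F) (m : ℤ) : hqint s m = hqnum s m / hqnum s 2 := rfl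

theorem hqnum_two_ne_zero {s : F} (hs : s ≠ 0) (hs4 : s ^ 4 ≠ 1) : hqnum s 2 ≠ 0 := by
  have h : hqnum s 2 = (s ^ 4 - 1) / s ^ 2 := by
    rw [hqnum, zpow_neg, zpow_ofNat]
    field_simp
  rw [h]
  exact div_ne_zero (sub_ne_zero.mpr hs4) (pow_ne_zero 2 hs)

theorem hqnum_leading_coeff_identity {s : F} (hs : s ≠ 0) (lam p : ℤ) :
    (s ^ (2 : ℤ)) ^ (-2 * lam - 2 * p + 1) * hqnum s (2 * p + 1) * hqnum s 2
      + (s ^ (2 : ℤ)) ^ (-lam + 1) * (hqnum s 2 + hqnum s (2 * (2 * p)))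
        * hqnum s (2 * lam + 2 * p - 1)
      + (s ^ (2 : ℤ)) ^ (2 * p + 1) * hqnum s (2 * lam + 2 * p - 1) * hqnum s (2 * lam)
      = hqnum s (2 * lam + 2 * p + 1) * hqnum s (2 * lam + 2 * (2 * p)) := by
  have ha : s ^ lam ≠ 0 := zpow_ne_zero _ hs
  have hb : s ^ p ≠ 0 := zpow_ne_zero _ hs
  simp only [hqnum, ← zpow_mul, neg_add, neg_sub, mul_add, mul_sub, mul_neg, neg_mul,
    zpow_add₀ hs, zpow_sub₀ hs, zpow_neg, ← mul_assoc]
  simp only [zpow_mul', zpow_ofNat]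
  field_simp
  ring

end

theorem singular_leading_coeff_oddP_general {F : Type*} [Field F] (s : F)
    (hs : s ≠ 0) (hs4 : s ^ 4 ≠ 1) (lam p : ℤ) :
    (s ^ (2 : ℤ)) ^ (-2 * lam - 2 * p + 1) * hqint s (2 * p + 1)
      + (s ^ (2 : ℤ)) ^ (-lam + 1) * (1 + hqint s (2 * (2 * p))) * hqint s (2 * lam + 2 * p - 1)
      + (s ^ (2 : ℤ)) ^ (2 * p + 1) * hqint s (2 * lam + 2 * p - 1) * hqint s (2 * lam)
      = hqint s (2 * lam + 2 * p + 1) * hqint s (2 * lam + 2 * (2 * p)) := by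
  have hd := hqnum_two_ne_zero hs hs4
  rw [← mul_left_inj' (pow_ne_zero 2 hd)]
  convert hqnum_leading_coeff_identity hs lam p using 1 <;>
    · simp only [hqint_eq_hqnum_div]
      field_simp

theorem singular_leading_coeff_oddP {F : Type*} [Field F] (s : F)
    (hs : s ≠ 0) (hs4 : s ^ 4 ≠ 1) (lam p : ℤ) (hp : 0 ≤ p) :
    (s ^ (2 : ℤ)) ^ (-2 * lam - 2 * p + 1) * hqint s (2 * p + 1)
      + (s ^ (2 : ℤ)) ^ (-lam + 1) * (1 + hqint s (2 * (2 * p))) * hqint s (2 * lam + 2 * p - 1)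
      + (s ^ (2 : ℤ)) ^ (2 * p + 1) * hqint s (2 * lam + 2 * p - 1) * hqint s (2 * lam)
      = hqint s (2 * lam + 2 * p + 1) * hqint s (2 * lam + 2 * (2 * p)) :=
  singular_leading_coeff_oddP_general s hs hs4 lam p
end
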